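/- For every continuous φ : ℤ_p → ℂ_p and all x, y ∈ ℤ_p, the identity I^x(σφ)(y) = I^{x+1}(φ)(y) + y·I^x(φ)(y−1) holds, where I^x(φ)(y) = ∑_{k=0}^∞ (-1)^k k! (y choose k)(x choose k) φ(x−k) and (σφ)(x) = φ(x+1). -/

import Mathlib

open Finset

/-- `(x choose k)` on `ℤ_p`, valued in a normed `ℚ_p`-algebra `K` (modelling `ℂ_p`). -/
noncomputable def padicBinom (p : ℕ) [Fact p.Prime] (K : Type*) [NormedField K]
    [NormedAlgebra ℚ_[p] K] (x : ℤ_[p]) (k : ℕ) : K :=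
  algebraMap ℚ_[p] K ((∏ i ∈ Finset.range k, ((x : ℚ_[p]) - (i : ℚ_[p]))) / (k.factorial : ℚ_[p]))

/-- The transform `I^x`, `I^x(φ)(y) = ∑_{k≥0} (-1)^k k! (y choose k)(x choose k) φ(x−k)`. -/
noncomputable def Iop (p : ℕ) [Fact p.Prime] {K : Type*} [NormedField K]
    [NormedAlgebra ℚ_[p] K] (x : ℤ_[p]) (φ : ℤ_[p] → K) (y : ℤ_[p]) : K :=
  ∑' k : ℕ,
    (-1 : K) ^ k * (k.factorial : K) * padicBinom p K y k * padicBinom p K x k * φ (x - (k : ℤ_[p]))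

/-! Pascal's rule `(x+1 choose k+1) = (x choose k+1) + (x choose k)` and the absorption identity
`(k+1) (y choose k+1) = y (y-1 choose k)` turn the `(k+1)`-st term of `I^x(σφ)(y)` into the
`(k+1)`-st term of `I^{x+1}(φ)(y)` plus `y` times the `k`-th term of `I^x(φ)(y-1)`, and the
`0`-th terms agree. All three series converge since `|k!|_p → 0`, binomial coefficients of
`p`-adic integers are `p`-adic integers, and `φ` is bounded on the compact `ℤ_p`. -/

open Filter Topology

theorem Ring.choose_eq_prod_div {R : Type*} [Field R] [CharZero R] (a : R) (n : ℕ) :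
    Ring.choose a n = (∏ i ∈ range n, (a - i)) / n.factorial := by
  rw [Ring.choose_eq_smul, ← Polynomial.aeval_eq_smeval, ← Polynomial.eval_map_algebraMap,
    descPochhammer_map, descPochhammer_eval_eq_prod_range, smul_eq_mul, inv_mul_eq_div]

theorem Ring.succ_nsmul_choose_succ {R : Type*} [Ring R] [BinomialRing R] (r : R) (k : ℕ) :
    (k + 1) • Ring.choose r (k + 1) = r * Ring.choose (r - 1) k := by
  simpa [Ring.choose_one_right] using Ring.choose_smul_choose r (Nat.le_add_left 1 k)

theorem HasSum.of_succ_eq_add {G : Type*} [AddCommGroup G] [TopologicalSpace G]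
    [IsTopologicalAddGroup G] {f g h : ℕ → G} {a b : G} (hg : HasSum g a) (hh : HasSum h b)
    (h₀ : f 0 = g 0) (hsucc : ∀ k, f (k + 1) = g (k + 1) + h k) : HasSum f (a + b) := by
  rw [← hasSum_nat_add_iff' 1] at hg ⊢
  simpa [hsucc, h₀, sub_add_eq_add_sub] using hg.add hh

theorem Padic.tendsto_norm_factorial (p : ℕ) [Fact p.Prime] :
    Tendsto (fun k : ℕ => ‖(k.factorial : ℚ_[p])‖) atTop (𝓝 0) := by
  have hp := (Fact.out : p.Prime)
  have bound (k : ℕ) : ‖(k.factorial : ℚ_[p])‖ ≤ (p : ℝ)⁻¹ ^ (k / p) := by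
    have hdvd : p ^ (k / p) ∣ k.factorial := by
      refine (pow_dvd_pow p ?_).trans (pow_padicValNat_dvd.trans
        (Nat.factorial_dvd_factorial (Nat.mul_div_le k p)))
      rw [padicValNat_factorial_mul]
      exact Nat.le_add_left _ _
    rw [inv_pow, ← zpow_natCast, ← zpow_neg]
    exact_mod_cast (Padic.norm_int_le_pow_iff_dvd (k.factorial : ℤ) (k / p)).2 (mod_cast hdvd)
  refine squeeze_zero (fun _ => norm_nonneg _) bound
    ((tendsto_pow_atTop_nhds_zero_of_lt_one (by positivity) ?_).comp
      (Nat.tendsto_div_const_atTop hp.ne_zero))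
  exact inv_lt_one_of_one_lt₀ (mod_cast hp.one_lt)

theorem summable_factorial_mul (p : ℕ) [Fact p.Prime] {K : Type*} [NormedField K]
    [NormedAlgebra ℚ_[p] K] [IsUltrametricDist K] [CompleteSpace K] {a : ℕ → K} {C : ℝ}
    (ha : ∀ k, ‖a k‖ ≤ C) : Summable fun k => (k.factorial : K) * a k := by
  refine NonarchimedeanAddGroup.summable_of_tendsto_cofinite_zero ?_
  rw [Nat.cofinite_eq_atTop]
  refine squeeze_zero_norm (fun k => ?_)
    (by simpa using (Padic.tendsto_norm_factorial p).mul_const C)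
  rw [norm_mul, ← map_natCast (algebraMap ℚ_[p] K), norm_algebraMap']
  exact mul_le_mul_of_nonneg_left (ha k) (norm_nonneg _)

section padicBinom

variable (p : ℕ) [Fact p.Prime] {K : Type*} [NormedField K] [NormedAlgebra ℚ_[p] K]

theorem padicBinom_eq_algebraMap_choose (x : ℤ_[p]) (k : ℕ) :
    padicBinom p K x k = algebraMap ℚ_[p] K (Ring.choose x k : ℤ_[p]) := by
  rw [padicBinom, ← Ring.choose_eq_prod_div]
  congr 1
  exact (Ring.map_choose PadicInt.Coe.ringHom x k).symm

theorem norm_padicBinom_le_one (x : ℤ_[p]) (k : ℕ) : ‖padicBinom p K x k‖ ≤ 1 := by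
  rw [padicBinom_eq_algebraMap_choose, norm_algebraMap', ← PadicInt.norm_def]
  exact PadicInt.norm_le_one _

@[simp]
theorem padicBinom_zero_right (x : ℤ_[p]) : padicBinom p K x 0 = 1 := by
  simp [padicBinom]

theorem padicBinom_add_one_succ (x : ℤ_[p]) (k : ℕ) :
    padicBinom p K (x + 1) (k + 1) = padicBinom p K x k + padicBinom p K x (k + 1) := by
  simp only [padicBinom_eq_algebraMap_choose, Ring.choose_succ_succ, PadicInt.coe_add, map_add]

theorem succ_mul_padicBinom_succ (y : ℤ_[p]) (k : ℕ) :
    (k + 1 : K) * padicBinom p K y (k + 1) =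
      algebraMap ℚ_[p] K (y : ℚ_[p]) * padicBinom p K (y - 1) k := by
  have h := congrArg (fun c : ℤ_[p] => algebraMap ℚ_[p] K (c : ℚ_[p]))
    (Ring.succ_nsmul_choose_succ y k)
  simpa only [padicBinom_eq_algebraMap_choose, nsmul_eq_mul, PadicInt.coe_mul, map_mul,
    PadicInt.coe_add, PadicInt.coe_natCast, PadicInt.coe_one, map_add, map_natCast, map_one,
    Nat.cast_succ] using h

end padicBinom

section Iop

variable (p : ℕ) [Fact p.Prime] {K : Type*} [NormedField K] [NormedAlgebra ℚ_[p] K]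

noncomputable def iopTerm (x : ℤ_[p]) (φ : ℤ_[p] → K) (y : ℤ_[p]) (k : ℕ) : K :=
  (-1 : K) ^ k * (k.factorial : K) * padicBinom p K y k * padicBinom p K x k *
    φ (x - (k : ℤ_[p]))

@[simp]
theorem iopTerm_zero (x : ℤ_[p]) (φ : ℤ_[p] → K) (y : ℤ_[p]) :
    iopTerm p x φ y 0 = φ x := by
  simp [iopTerm]

theorem iopTerm_shift_succ (x : ℤ_[p]) (φ : ℤ_[p] → K) (y : ℤ_[p]) (k : ℕ) :
    iopTerm p x (fun t => φ (t + 1)) y (k + 1) =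
      iopTerm p (x + 1) φ y (k + 1) +
        algebraMap ℚ_[p] K (y : ℚ_[p]) * iopTerm p x φ (y - 1) k := by
  have hx₁ : x - ((k + 1 : ℕ) : ℤ_[p]) + 1 = x - k := by push_cast; ring
  have hx₂ : x + 1 - ((k + 1 : ℕ) : ℤ_[p]) = x - k := by push_cast; ring
  simp only [iopTerm]
  rw [hx₁, hx₂, padicBinom_add_one_succ, Nat.factorial_succ]
  push_cast
  linear_combination (-1 : K) ^ k * (k.factorial : K) * padicBinom p K x k * φ (x - k) *
    succ_mul_padicBinom_succ p (K := K) y k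

theorem hasSum_iopTerm [IsUltrametricDist K] [CompleteSpace K] (x y : ℤ_[p]) {φ : ℤ_[p] → K}
    {C : ℝ} (hφ : ∀ t, ‖φ t‖ ≤ C) : HasSum (iopTerm p x φ y) (Iop p x φ y) := by
  have hterm : iopTerm p x φ y = fun k => (k.factorial : K) *
      ((-1) ^ k * padicBinom p K y k * padicBinom p K x k * φ (x - k)) := by
    ext k; simp only [iopTerm]; ring
  apply Summable.hasSum
  rw [hterm]
  refine summable_factorial_mul p (C := C) fun k => ?_
  simp only [norm_mul, norm_pow, norm_neg, norm_one, one_pow, one_mul]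
  calc _ ≤ 1 * 1 * C := by
        gcongr
        exacts [norm_padicBinom_le_one p y k, norm_padicBinom_le_one p x k, hφ _]
    _ = C := by ring

end Iop

/-- For continuous `φ : ℤ_p → ℂ_p` and all `x, y ∈ ℤ_p`,
`I^x(σφ)(y) = I^{x+1}(φ)(y) + y·I^x(φ)(y−1)`, where `(σφ)(x) = φ(x+1)`. -/
theorem Iop_shift (p : ℕ) [Fact p.Prime] (K : Type*) [NontriviallyNormedField K]
    [NormedAlgebra ℚ_[p] K] [IsUltrametricDist K] [CompleteSpace K]
    (φ : ℤ_[p] → K) (hφ : Continuous φ) (x y : ℤ_[p]) :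
    Iop p x (fun t => φ (t + 1)) y =
      Iop p (x + 1) φ y + algebraMap ℚ_[p] K (y : ℚ_[p]) * Iop p x φ (y - 1) := by
  have hC := ContinuousMap.norm_coe_le_norm (⟨φ, hφ⟩ : C(ℤ_[p], K))
  have hy := (hasSum_iopTerm p x (y - 1) hC).mul_left (algebraMap ℚ_[p] K (y : ℚ_[p]))
  exact (HasSum.of_succ_eq_add (f := iopTerm p x (fun t => φ (t + 1)) y)
    (hasSum_iopTerm p (x + 1) y hC) hy (by simp) (iopTerm_shift_succ p x φ y)).tsum_eq
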